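/- arXiv:1406.3423 — 4 statements merged into one kernel-verified Lean document; each statement's English description precedes it below -/
import Mathlib

section
/- Let R be a Noetherian ring and M a finitely generated R-module. Then the set {dim_R N : N a nonzero submodule of M} equals {dim R/p : p ∈ Ass_R M}. -/
open IsLocalRing

/-- Krull dimension of a module, `⊥` for the zero module. -/
noncomputable def moduleKrullDim (R : Type*) [CommRing R] (M : Type*) [AddCommGroup M]
    [Module R M] : WithBot ℕ∞ :=
  ringKrullDim (R ⧸ Module.annihilator R M)

/-- A finitely generated module over a Noetherian local ring is Cohen-Macaulay if it admits a
regular sequence in the maximal ideal whose length equals its Krull dimension (depth = dim). -/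
def IsCMLocal (R : Type*) [CommRing R] [IsLocalRing R] (M : Type*) [AddCommGroup M]
    [Module R M] : Prop :=
  ∃ rs : List R, (∀ x ∈ rs, x ∈ maximalIdeal R) ∧ RingTheory.Sequence.IsRegular M rs ∧
    (rs.length : WithBot ℕ∞) = moduleKrullDim R M

/-- `D 0 = (0) ⊊ D 1 ⊊ ⋯ ⊊ D ℓ = M` is the dimension filtration of `M`:
each `D i` is the largest submodule of `D (i+1)` of strictly smaller dimension. -/
def IsDimFiltration (R : Type*) [CommRing R] {M : Type*} [AddCommGroup M] [Module R M]
    (D : ℕ → Submodule R M) (ℓ : ℕ) : Prop :=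
  D 0 = ⊥ ∧ D ℓ = ⊤ ∧ (∀ i < ℓ, D i < D (i + 1)) ∧
  (∀ i < ℓ, moduleKrullDim R (D i) < moduleKrullDim R (D (i + 1))) ∧
  ∀ i < ℓ, ∀ N : Submodule R M, N ≤ D (i + 1) →
    moduleKrullDim R N < moduleKrullDim R (D (i + 1)) → N ≤ D i

/-- The `i`-th quotient `D (i+1) / D i` of a filtration of submodules. -/
abbrev filtQuot {R : Type*} [CommRing R] {M : Type*} [AddCommGroup M] [Module R M]
    (D : ℕ → Submodule R M) (i : ℕ) :=
  ↥(D (i + 1)) ⧸ (Submodule.comap (D (i + 1)).subtype (D i))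

/-- A module over a Noetherian local ring is sequentially Cohen-Macaulay if all the quotients of
its dimension filtration are Cohen-Macaulay. -/
def IsSeqCMLocal (R : Type*) [CommRing R] [IsLocalRing R] (M : Type*) [AddCommGroup M]
    [Module R M] : Prop :=
  ∃ (ℓ : ℕ) (D : ℕ → Submodule R M), IsDimFiltration R D ℓ ∧
    ∀ i < ℓ, IsCMLocal R (filtQuot D i)

/-- A module over an arbitrary commutative Noetherian ring is Cohen-Macaulay if its localization at
every maximal ideal of the support is Cohen-Macaulay. -/
def IsCMGlobal (A : Type*) [CommRing A] (N : Type*) [AddCommGroup N] [Module A N] : Prop :=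
  ∀ P : Ideal A, ∀ hP : P.IsMaximal,
    letI := hP.isPrime
    Nontrivial (LocalizedModule P.primeCompl N) →
      IsCMLocal (Localization.AtPrime P) (LocalizedModule P.primeCompl N)

/-- Sequentially Cohen-Macaulay module over an arbitrary commutative ring. -/
def IsSeqCMGlobal (A : Type*) [CommRing A] (N : Type*) [AddCommGroup N] [Module A N] : Prop :=
  ∃ (ℓ : ℕ) (D : ℕ → Submodule A N), IsDimFiltration A D ℓ ∧
    ∀ i < ℓ, IsCMGlobal A (filtQuot D i)

/-- A Noetherian local ring is sequentially Cohen-Macaulay if it is so as a module over itself. -/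
abbrev IsSeqCMLocalRing (R : Type*) [CommRing R] [IsLocalRing R] : Prop := IsSeqCMLocal R R

abbrev IsSeqCMRing (A : Type*) [CommRing A] : Prop := IsSeqCMGlobal A A

/-! Every prime containing `ann N` contains a minimal prime of `ann N`, so `dim R/ann N` is the
maximum of `dim R/p` over the finitely many minimal primes `p` of `ann N`; these are associated
primes of `N`, hence of `M`. Conversely an associated prime `p = ann x` is the annihilator of the
nonzero submodule `R ∙ x`. -/

theorem Order.krullDim_le_iSup_krullDim_of_subset_iUnion {α ι : Type*} [Preorder α]
    {s : Set α} {t : ι → Set α} (ht : ∀ i, IsUpperSet (t i)) (hs : s ⊆ ⋃ i, t i) :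
    krullDim s ≤ ⨆ i, krullDim (t i) := by
  refine iSup_le fun l => ?_
  obtain ⟨i, hi⟩ := Set.mem_iUnion.mp (hs l.head.2)
  let l' : LTSeries (t i) :=
    { length := l.length
      toFun := fun j => ⟨l j, ht i (l.head_le j) hi⟩
      step := l.step }
  exact le_iSup_of_le i (LTSeries.length_le_krullDim l')

theorem ringKrullDim_quotient_eq_iSup_minimalPrimes {R : Type*} [CommRing R] (I : Ideal R) :
    ringKrullDim (R ⧸ I) = ⨆ p : I.minimalPrimes, ringKrullDim (R ⧸ (p : Ideal R)) := by
  refine le_antisymm ?_ (iSup_le fun p => ringKrullDim_le_of_surjective _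
    (Ideal.Quotient.factor_surjective p.2.1.2))
  simp only [ringKrullDim_quotient]
  refine Order.krullDim_le_iSup_krullDim_of_subset_iUnion
    (fun _ _ _ hle hx => Set.Subset.trans hx hle) fun q hq => ?_
  obtain ⟨p, hp, hpq⟩ := Ideal.exists_minimalPrimes_le (J := q.asIdeal) hq
  exact Set.mem_iUnion.mpr ⟨⟨p, hp⟩, hpq⟩

theorem Ideal.exists_mem_minimalPrimes_ringKrullDim_quotient_eq {R : Type*} [CommRing R]
    [IsNoetherianRing R] {I : Ideal R} (hI : I ≠ ⊤) :
    ∃ p ∈ I.minimalPrimes, ringKrullDim (R ⧸ p) = ringKrullDim (R ⧸ I) := by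
  have : Finite I.minimalPrimes := I.finite_minimalPrimes_of_isNoetherianRing R
  have : Nonempty I.minimalPrimes := Ideal.nonempty_minimalPrimes hI
  obtain ⟨p, hp⟩ := exists_eq_ciSup_of_finite
    (f := fun p : I.minimalPrimes => ringKrullDim (R ⧸ (p : Ideal R)))
  exact ⟨p, p.2, hp.trans (ringKrullDim_quotient_eq_iSup_minimalPrimes I).symm⟩

theorem exists_mem_associatedPrimes_ringKrullDim_quotient_eq (R : Type*) [CommRing R]
    [IsNoetherianRing R] (M : Type*) [AddCommGroup M] [Module R M] [Module.Finite R M]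
    [Nontrivial M] : ∃ p ∈ associatedPrimes R M, ringKrullDim (R ⧸ p) = moduleKrullDim R M := by
  obtain ⟨p, hp, hdim⟩ := Ideal.exists_mem_minimalPrimes_ringKrullDim_quotient_eq
    (mt (Module.annihilator_eq_top_iff (R := R) (M := M)).mp (not_subsingleton M))
  exact ⟨p, Module.associatedPrimes.minimalPrimes_annihilator_subset_associatedPrimes R M hp, hdim⟩

/-- For a finitely generated module over a Noetherian ring, the set of dimensions
of nonzero submodules equals the set of dimensions `dim R/p` for `p` an associated prime. -/
theorem stmt3 (R : Type) [CommRing R] [IsNoetherianRing R]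
    (M : Type) [AddCommGroup M] [Module R M] [Module.Finite R M] :
    {d : WithBot ℕ∞ | ∃ N : Submodule R M, N ≠ ⊥ ∧ moduleKrullDim R (↥N) = d} =
      {d : WithBot ℕ∞ | ∃ p ∈ associatedPrimes R M, ringKrullDim (R ⧸ p) = d} := by
  ext d
  constructor
  · rintro ⟨N, hN, rfl⟩
    have : Nontrivial N := Submodule.nontrivial_iff_ne_bot.mpr hN
    obtain ⟨p, hp, hdim⟩ := exists_mem_associatedPrimes_ringKrullDim_quotient_eq R N
    exact ⟨p, associatedPrimes.subset_of_injective N.injective_subtype hp, hdim⟩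
  · rintro ⟨p, hp, rfl⟩
    obtain ⟨hprime, x, hx⟩ := isAssociatedPrime_iff.mp hp
    rw [Submodule.bot_colon'] at hx
    refine ⟨R ∙ x, fun h => hprime.ne_top ?_, congrArg (fun I => ringKrullDim (R ⧸ I)) hx.symm⟩
    rw [hx, h, Submodule.annihilator_bot]
end

section
/- Let R be a 2-dimensional Noetherian local domain of depth 1 and let x be a nonzero element of R. Then R/(x) is a sequentially Cohen-Macaulay ring but R is not a sequentially Cohen-Macaulay ring. -/
open IsLocalRing

/-!
Over a domain every nonzero ideal has the full dimension, so the dimension filtration of `R` is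
`0 ⊂ R`, and `R` is sequentially Cohen–Macaulay only if it is Cohen–Macaulay, which depth one
rules out.

`R/(x)` has dimension at most one because `x` is a nonzerodivisor. For a finite module `M` of
dimension at most one over a Noetherian local ring, let `T = H⁰_𝔪(M)` be its `𝔪`-power torsion.
A submodule has dimension `≤ 0` exactly when it lies in `T`, so the dimension filtration is
`0 ⊆ T ⊆ M`. The quotient `T` has dimension zero, and `M/T` has no `𝔪`-torsion, hence an
`M/T`-regular element of `𝔪`, which is a system of parameters of the one-dimensional `M/T`.
-/

open RingTheory.Sequence Module

section ModuleKrullDim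

variable {R : Type*} [CommRing R] {M N : Type*} [AddCommGroup M] [Module R M]
  [AddCommGroup N] [Module R N]

lemma moduleKrullDim_le_of_annihilator_le (h : annihilator R M ≤ annihilator R N) :
    moduleKrullDim R N ≤ moduleKrullDim R M :=
  ringKrullDim_le_of_surjective _ (Ideal.Quotient.factor_surjective h)

lemma moduleKrullDim_le_of_injective (f : N →ₗ[R] M) (hf : Function.Injective f) :
    moduleKrullDim R N ≤ moduleKrullDim R M :=
  moduleKrullDim_le_of_annihilator_le (f.annihilator_le_of_injective hf)

lemma moduleKrullDim_le_of_surjective (f : M →ₗ[R] N) (hf : Function.Surjective f) :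
    moduleKrullDim R N ≤ moduleKrullDim R M :=
  moduleKrullDim_le_of_annihilator_le (f.annihilator_le_of_surjective hf)

lemma moduleKrullDim_eq_of_equiv (e : M ≃ₗ[R] N) : moduleKrullDim R M = moduleKrullDim R N := by
  rw [moduleKrullDim, moduleKrullDim, e.annihilator_eq]

lemma moduleKrullDim_eq_bot_iff : moduleKrullDim R M = ⊥ ↔ Subsingleton M := by
  rw [moduleKrullDim, ringKrullDim, Order.krullDim_eq_bot_iff,
    PrimeSpectrum.isEmpty_iff_subsingleton, Ideal.Quotient.subsingleton_iff, annihilator_eq_top_iff]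

lemma moduleKrullDim_nonneg [Nontrivial M] : 0 ≤ moduleKrullDim R M :=
  have : Nontrivial (R ⧸ annihilator R M) :=
    Ideal.Quotient.nontrivial_iff.mpr (annihilator_eq_top_iff.not.mpr (not_subsingleton M))
  ringKrullDim_nonneg_of_nontrivial

lemma moduleKrullDim_eq_supportDim [Module.Finite R M] :
    moduleKrullDim R M = supportDim R M :=
  (supportDim_eq_ringKrullDim_quotient_annihilator R M).symm

lemma moduleKrullDim_self : moduleKrullDim R R = ringKrullDim R := by
  rw [moduleKrullDim_eq_supportDim, supportDim_self_eq_ringKrullDim]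

namespace Submodule

lemma moduleKrullDim_le (P : Submodule R M) : moduleKrullDim R P ≤ moduleKrullDim R M :=
  moduleKrullDim_le_of_injective P.subtype P.injective_subtype

lemma moduleKrullDim_top : moduleKrullDim R (⊤ : Submodule R M) = moduleKrullDim R M :=
  moduleKrullDim_eq_of_equiv topEquiv

lemma moduleKrullDim_nonneg {P : Submodule R M} (hP : P ≠ ⊥) : 0 ≤ moduleKrullDim R P :=
  have : Nontrivial P := nontrivial_iff_ne_bot.mpr hP
  _root_.moduleKrullDim_nonneg

lemma eq_bot_of_moduleKrullDim_lt_zero {P : Submodule R M} (hP : moduleKrullDim R P < 0) :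
    P = ⊥ :=
  by_contra fun h => (moduleKrullDim_nonneg h).not_gt hP

lemma moduleKrullDim_bot_lt {P : Submodule R M} (hP : P ≠ ⊥) :
    moduleKrullDim R (⊥ : Submodule R M) < moduleKrullDim R P :=
  (moduleKrullDim_eq_bot_iff.mpr inferInstance).trans_lt
    ((WithBot.bot_lt_coe 0).trans_le (moduleKrullDim_nonneg hP))

def topQuotientEquiv (P : Submodule R M) :
    (↥(⊤ : Submodule R M) ⧸ comap (⊤ : Submodule R M).subtype P) ≃ₗ[R] M ⧸ P :=
  Quotient.equiv _ _ topEquiv (by ext; simp)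

def quotientBotEquiv (P : Submodule R M) : (↥P ⧸ comap P.subtype (⊥ : Submodule R M)) ≃ₗ[R] P :=
  quotEquivOfEqBot _ (by simp)

end Submodule

end ModuleKrullDim

section LocalRing

variable {R : Type*} [CommRing R] [IsLocalRing R] {M N : Type*} [AddCommGroup M] [Module R M]
  [AddCommGroup N] [Module R N]

lemma IsCMLocal.of_equiv (e : M ≃ₗ[R] N) (h : IsCMLocal R M) : IsCMLocal R N := by
  obtain ⟨rs, hmem, hreg, hlen⟩ := h
  exact ⟨rs, hmem, (e.isRegular_congr rs).mp hreg, hlen.trans (moduleKrullDim_eq_of_equiv e)⟩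

lemma isCMLocal_of_moduleKrullDim_eq_zero (h : moduleKrullDim R M = 0) : IsCMLocal R M :=
  have : Nontrivial M := not_subsingleton_iff_nontrivial.mp
    (moduleKrullDim_eq_bot_iff.not.mp (h.trans_ne WithBot.zero_ne_bot))
  ⟨[], by simp, IsRegular.nil R M, by simp [h]⟩

theorem isSeqCMLocal_iff_isCMLocal [Nontrivial M]
    (h : ∀ P : Submodule R M, moduleKrullDim R P < moduleKrullDim R M → P = ⊥) :
    IsSeqCMLocal R M ↔ IsCMLocal R M := by
  constructor
  · rintro ⟨ℓ, D, ⟨hD0, hDℓ, hlt, hdim, -⟩, hCM⟩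
    obtain rfl : ℓ = 1 := by
      by_contra hℓ
      obtain rfl | hℓ : ℓ = 0 ∨ 2 ≤ ℓ := by omega
      · exact bot_ne_top (hD0.symm.trans hDℓ)
      · have hD1 : D 1 = ⊥ := h _ ((hdim 1 hℓ).trans_le (Submodule.moduleKrullDim_le _))
        exact (hlt 0 (by omega)).ne (hD0.trans hD1.symm)
    have e : filtQuot D 0 ≃ₗ[R] M :=
      (Submodule.quotEquivOfEqBot _ (by simp [hD0])).trans
        ((LinearEquiv.ofEq _ _ hDℓ).trans Submodule.topEquiv)
    exact (hCM 0 one_pos).of_equiv e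
  · intro hM
    refine ⟨1, fun i => if i = 0 then ⊥ else ⊤, ⟨rfl, rfl, ?_, ?_, ?_⟩, ?_⟩ <;>
      intro i hi <;> obtain rfl : i = 0 := by omega
    · exact bot_lt_top
    · exact Submodule.moduleKrullDim_bot_lt top_ne_bot
    · exact fun P _ hP => (h P (hP.trans_eq Submodule.moduleKrullDim_top)).le
    · exact hM.of_equiv
        ((Submodule.topQuotientEquiv ⊥).trans (Submodule.quotEquivOfEqBot ⊥ rfl)).symm

theorem isSeqCMLocal_of_isCMLocal_of_isCMLocal_quotient (T : Submodule R M) (hT0 : T ≠ ⊥)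
    (hTtop : T ≠ ⊤) (hlt : moduleKrullDim R T < moduleKrullDim R M)
    (hT : ∀ P ≤ T, moduleKrullDim R P < moduleKrullDim R T → P = ⊥)
    (hM : ∀ P : Submodule R M, moduleKrullDim R P < moduleKrullDim R M → P ≤ T)
    (hTCM : IsCMLocal R T) (hQCM : IsCMLocal R (M ⧸ T)) : IsSeqCMLocal R M := by
  refine ⟨2, fun i => if i = 0 then ⊥ else if i = 1 then T else ⊤, ⟨rfl, rfl, ?_, ?_, ?_⟩, ?_⟩ <;>
    intro i hi <;> obtain rfl | rfl : i = 0 ∨ i = 1 := by omega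
  · exact bot_lt_iff_ne_bot.mpr hT0
  · exact lt_top_iff_ne_top.mpr hTtop
  · exact Submodule.moduleKrullDim_bot_lt hT0
  · exact hlt.trans_eq Submodule.moduleKrullDim_top.symm
  · exact fun P hP hdim => (hT P hP hdim).le
  · exact fun P _ hdim => hM P (hdim.trans_eq Submodule.moduleKrullDim_top)
  · exact hTCM.of_equiv (Submodule.quotientBotEquiv T).symm
  · exact hQCM.of_equiv (Submodule.topQuotientEquiv T).symm

end LocalRing

section PrimaryComponent

variable {R : Type*} [CommRing R] {M : Type*} [AddCommGroup M] [Module R M] [IsNoetherian R M]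
  (I : Ideal R)

open Submodule

lemma Ideal.exists_primaryComponent_eq_torsionBySet_pow :
    ∃ n, I.primaryComponent M = torsionBySet R M ↑(I ^ n) := by
  obtain ⟨n, hn⟩ := monotone_stabilizes_iff_noetherian.mpr inferInstance
    ⟨fun n => torsionBySet R M ↑(I ^ n), fun i j h => torsionBySet_le_torsionBySet_pow i j h I⟩
  refine ⟨n, le_antisymm (iSup_le fun m => ?_) (le_iSup (fun i => torsionBySet R M ↑(I ^ i)) n)⟩
  rcases le_total m n with h | h
  · exact torsionBySet_le_torsionBySet_pow m n h I
  · exact (hn m h).ge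

lemma Ideal.le_primaryComponent_iff (P : Submodule R M) :
    P ≤ I.primaryComponent M ↔ ∃ k, I ^ k ≤ P.annihilator := by
  obtain ⟨n, hn⟩ := I.exists_primaryComponent_eq_torsionBySet_pow (M := M)
  constructor
  · exact fun h => ⟨n, (torsion_gc R M).le_iff_le.mpr (hn ▸ h)⟩
  · rintro ⟨k, hk⟩
    exact ((torsion_gc R M).le_iff_le.mp hk).trans
      (le_iSup (fun i => torsionBySet R M ↑(I ^ i)) k)

lemma Ideal.primaryComponent_quotient_primaryComponent_eq_bot :
    I.primaryComponent (M ⧸ I.primaryComponent M) = ⊥ := by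
  refine eq_bot_iff.mpr fun y hy => ?_
  obtain ⟨x, rfl⟩ := mkQ_surjective _ y
  obtain ⟨n, hn⟩ := I.exists_primaryComponent_eq_torsionBySet_pow (M := M)
  obtain ⟨k, hk⟩ := (I.primaryComponent_mem _ _).mp hy
  have hkill : I ^ n * I ^ k ≤ Ideal.torsionOf R M x := Ideal.mul_le.mpr fun b hb a ha => by
    have hax : a • x ∈ torsionBySet R M ↑(I ^ n) :=
      hn ▸ (Quotient.mk_eq_zero _).mp ((mem_torsionBySet_iff _ _).mp hk ⟨a, ha⟩)
    rw [Ideal.mem_torsionOf_iff, mul_smul]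
    exact (mem_torsionBySet_iff _ _).mp hax ⟨b, hb⟩
  rw [Submodule.mem_bot, mkQ_apply, Quotient.mk_eq_zero, Ideal.primaryComponent_mem]
  exact ⟨n + k, (mem_torsionBySet_iff _ _).mpr fun ⟨c, hc⟩ => hkill (pow_add I n k ▸ hc)⟩

end PrimaryComponent

section NoetherianLocal

variable {R : Type*} [CommRing R] [IsLocalRing R] [IsNoetherianRing R]
  {M : Type*} [AddCommGroup M] [Module R M] [Module.Finite R M]

lemma supportDim_le_zero_iff :
    supportDim R M ≤ 0 ↔ ∃ k, maximalIdeal R ^ k ≤ annihilator R M := by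
  constructor
  · intro h
    refine Ideal.exists_pow_le_of_le_radical_of_fg ?_ (IsNoetherian.noetherian _)
    rw [Ideal.radical_eq_sInf]
    refine le_sInf fun p ⟨hle, hp⟩ => ?_
    have hpM : (⟨p, hp⟩ : PrimeSpectrum R) ∈ support R M := mem_support_iff_of_finite.mpr hle
    have : Nontrivial M := nonempty_support_iff.mp ⟨_, hpM⟩
    exact Order.krullDim_nonpos_iff_forall_isMax.mp h ⟨_, hpM⟩
      (show _ ≤ ⟨closedPoint R, closedPoint_mem_support R M⟩ from le_maximalIdeal hp.ne_top)
  · rintro ⟨k, hk⟩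
    refine Order.krullDim_nonpos_iff_forall_isMax.mpr fun p q _ => ?_
    have hm : maximalIdeal R ≤ p.1.asIdeal :=
      p.1.isPrime.le_of_pow_le (hk.trans (mem_support_iff_of_finite.mp p.2))
    exact (le_maximalIdeal q.1.isPrime.ne_top).trans hm

lemma moduleKrullDim_le_zero_iff_le_primaryComponent (P : Submodule R M) :
    moduleKrullDim R P ≤ 0 ↔ P ≤ (maximalIdeal R).primaryComponent M := by
  rw [moduleKrullDim_eq_supportDim, supportDim_le_zero_iff, Ideal.le_primaryComponent_iff]

lemma exists_isSMulRegular_of_primaryComponent_eq_bot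
    (h : (maximalIdeal R).primaryComponent M = ⊥) :
    ∃ y ∈ maximalIdeal R, IsSMulRegular M y := by
  -- Such a `y` exists iff `Hom(R/𝔪, M) = 0`, and a map `R/𝔪 → M` sends `1` into the `𝔪`-torsion.
  suffices hsub : Subsingleton ((R ⧸ maximalIdeal R) →ₗ[R] M) by
    rwa [IsSMulRegular.subsingleton_linearMap_iff, Ideal.annihilator_quotient] at hsub
  refine subsingleton_of_forall_eq 0 fun f => LinearMap.ext fun q => ?_
  obtain ⟨r, rfl⟩ := Ideal.Quotient.mk_surjective q
  have hsocle : f (Submodule.Quotient.mk 1) ∈ (maximalIdeal R).primaryComponent M :=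
    (Ideal.primaryComponent_mem _ _ _).mpr ⟨1, (Submodule.mem_torsionBySet_iff _ _).mpr
      fun ⟨a, ha⟩ => by
        rw [← map_smul, ← Submodule.Quotient.mk_smul, smul_eq_mul, mul_one,
          (Submodule.Quotient.mk_eq_zero _).mpr (by simpa using ha), map_zero]⟩
  rw [h, Submodule.mem_bot] at hsocle
  show f (Submodule.Quotient.mk r) = 0
  rw [← mul_one r, ← smul_eq_mul, Submodule.Quotient.mk_smul, map_smul, hsocle, smul_zero]

lemma isCMLocal_of_isSMulRegular_of_moduleKrullDim_le_one [Nontrivial M] {y : R}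
    (hy : y ∈ maximalIdeal R) (hreg : IsSMulRegular M y) (hdim : moduleKrullDim R M ≤ 1) :
    IsCMLocal R M := by
  have hyreg : IsRegular M [y] :=
    (IsLocalRing.isRegular_iff_isWeaklyRegular_of_subset_maximalIdeal (by simpa)).mpr
      ((isWeaklyRegular_cons_iff M y []).mpr ⟨hreg, by simp⟩)
  refine ⟨[y], by simpa, hyreg, le_antisymm ?_ hdim⟩
  have : Nontrivial (M ⧸ Ideal.ofList [y] • (⊤ : Submodule R M)) :=
    Submodule.Quotient.nontrivial_iff.mpr hyreg.2.symm
  rw [moduleKrullDim_eq_supportDim, ← supportDim_add_length_eq_supportDim_of_isRegular [y] hyreg]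
  exact le_add_of_nonneg_left (moduleKrullDim_nonneg.trans_eq moduleKrullDim_eq_supportDim)

theorem isSeqCMLocal_of_moduleKrullDim_le_one [Nontrivial M] (hdim : moduleKrullDim R M ≤ 1) :
    IsSeqCMLocal R M := by
  set T := (maximalIdeal R).primaryComponent M
  have hsmall := moduleKrullDim_le_zero_iff_le_primaryComponent (R := R) (M := M)
  by_cases hTtop : T = ⊤
  · have hM0 : moduleKrullDim R M = 0 := le_antisymm
      (Submodule.moduleKrullDim_top.symm.trans_le ((hsmall ⊤).mpr hTtop.ge)) moduleKrullDim_nonneg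
    exact (isSeqCMLocal_iff_isCMLocal fun P hP =>
      Submodule.eq_bot_of_moduleKrullDim_lt_zero (hP.trans_eq hM0)).mpr
        (isCMLocal_of_moduleKrullDim_eq_zero hM0)
  have hM (P : Submodule R M) (hP : moduleKrullDim R P < moduleKrullDim R M) : P ≤ T :=
    (hsmall P).mp (Order.le_of_lt_succ (hP.trans_le hdim))
  by_cases hT0 : T = ⊥
  · obtain ⟨y, hy, hreg⟩ := exists_isSMulRegular_of_primaryComponent_eq_bot hT0
    exact (isSeqCMLocal_iff_isCMLocal fun P hP => le_bot_iff.mp (hT0 ▸ hM P hP)).mpr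
      (isCMLocal_of_isSMulRegular_of_moduleKrullDim_le_one hy hreg hdim)
  have hT : moduleKrullDim R T = 0 :=
    le_antisymm ((hsmall T).mpr le_rfl) (Submodule.moduleKrullDim_nonneg hT0)
  have hpos : 0 < moduleKrullDim R M := lt_of_not_ge fun h =>
    hTtop (top_le_iff.mp ((hsmall ⊤).mp (Submodule.moduleKrullDim_top.trans_le h)))
  have : Nontrivial (M ⧸ T) := Submodule.Quotient.nontrivial_iff.mpr hTtop
  obtain ⟨y, hy, hreg⟩ := exists_isSMulRegular_of_primaryComponent_eq_bot
    ((maximalIdeal R).primaryComponent_quotient_primaryComponent_eq_bot (M := M))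
  have hQdim : moduleKrullDim R (M ⧸ T) ≤ 1 :=
    (moduleKrullDim_le_of_surjective T.mkQ T.mkQ_surjective).trans hdim
  exact isSeqCMLocal_of_isCMLocal_of_isCMLocal_quotient T hT0 hTtop (hT ▸ hpos)
    (fun P _ hP => Submodule.eq_bot_of_moduleKrullDim_lt_zero (hP.trans_eq hT)) hM
    (isCMLocal_of_moduleKrullDim_eq_zero hT)
    (isCMLocal_of_isSMulRegular_of_moduleKrullDim_le_one hy hreg hQdim)

end NoetherianLocal

section Domain

variable {R : Type*} [CommRing R] [IsDomain R]

lemma moduleKrullDim_ideal_of_ne_bot {I : Ideal R} (hI : I ≠ ⊥) :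
    moduleKrullDim R I = ringKrullDim R := by
  obtain ⟨a, ha, ha0⟩ := I.ne_bot_iff.mp hI
  have hann : annihilator R I = ⊥ := eq_bot_iff.mpr fun r hr =>
    (mul_eq_zero.mp (congrArg Subtype.val (mem_annihilator.mp hr ⟨a, ha⟩))).resolve_right ha0
  rw [moduleKrullDim, hann, ringKrullDim_eq_of_ringEquiv (RingEquiv.quotientBot R)]

lemma isSeqCMLocal_self_iff_isCMLocal [IsLocalRing R] : IsSeqCMLocal R R ↔ IsCMLocal R R :=
  isSeqCMLocal_iff_isCMLocal fun _ hI => by_contra fun h =>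
    hI.ne ((moduleKrullDim_ideal_of_ne_bot h).trans moduleKrullDim_self.symm)

end Domain

theorem stmt6_general (R : Type) [CommRing R] [IsDomain R] [IsLocalRing R] [IsNoetherianRing R]
    (hdim : ringKrullDim R = 2)
    (hdepth2 : ∀ rs : List R, rs.length = 2 → (∀ y ∈ rs, y ∈ IsLocalRing.maximalIdeal R) →
      ¬ RingTheory.Sequence.IsRegular R rs)
    (x : R) (hx0 : x ≠ 0)
    [IsLocalRing (R ⧸ Ideal.span {x})] :
    IsSeqCMLocalRing (R ⧸ Ideal.span {x}) ∧ ¬ IsSeqCMLocalRing R := by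
  constructor
  · have hx := ringKrullDim_quotient_succ_le_of_nonZeroDivisor (mem_nonZeroDivisors_of_ne_zero hx0)
    rw [hdim] at hx
    exact isSeqCMLocal_of_moduleKrullDim_le_one
      (moduleKrullDim_self.trans_le (ENat.WithBot.add_le_add_natCast_right_iff.mp hx))
  · rw [IsSeqCMLocalRing, isSeqCMLocal_self_iff_isCMLocal]
    rintro ⟨rs, hrs, hreg, hlen⟩
    rw [moduleKrullDim_self, hdim] at hlen
    exact hdepth2 rs (by exact_mod_cast hlen) hrs hreg

/-- Let `R` be a 2-dimensional Noetherian local domain of depth 1 (there is a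
regular element in the maximal ideal, but no regular sequence of length two), and let `x ≠ 0` be
a nonunit.  Then `R/(x)` is a sequentially Cohen-Macaulay (local) ring, while `R` is not. -/
theorem stmt6 (R : Type) [CommRing R] [IsDomain R] [IsLocalRing R] [IsNoetherianRing R]
    (hdim : ringKrullDim R = 2)
    (hdepth1 : ∃ y ∈ IsLocalRing.maximalIdeal R, IsSMulRegular R y)
    (hdepth2 : ∀ rs : List R, rs.length = 2 → (∀ y ∈ rs, y ∈ IsLocalRing.maximalIdeal R) →
      ¬ RingTheory.Sequence.IsRegular R rs)
    (x : R) (hx0 : x ≠ 0) (hxu : ¬ IsUnit x)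
    [IsLocalRing (R ⧸ Ideal.span {x})] :
    IsSeqCMLocalRing (R ⧸ Ideal.span {x}) ∧ ¬ IsSeqCMLocalRing R :=
  stmt6_general R hdim hdepth2 x hx0
end

section
/- Let R be a Noetherian ring, F = {F_n} a filtration of ideals of R with F_1 ≠ R such that the Rees algebra R(F) = ⊕_{n≥0} F_n t^n is Noetherian, M a finitely generated R-module, and M = {M_n} an F-filtration with Rees module R(M) finitely generated over R(F). If P ∈ Ass_{R(F)} R(M), then p := P ∩ R ∈ Ass_R M and P = pR[t] ∩ R(F). -/
set_option synthInstance.maxHeartbeats 1000000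
set_option maxHeartbeats 1000000

open IsLocalRing

section Rees
variable {R : Type*} [CommRing R]

/-- A filtration `F = {F n}` of ideals: `F 0 = R`, decreasing, `F m * F n ⊆ F (m + n)`
(so `F n = R` for `n ≤ 0`). -/
structure IdealFiltration (R : Type*) [CommRing R] where
  F : ℤ → Ideal R
  zero_eq : F 0 = ⊤
  antitone : ∀ m n : ℤ, m ≤ n → F n ≤ F m
  mul_le : ∀ m n : ℤ, F m * F n ≤ F (m + n)

/-- The Rees algebra `R(F) = ⊕_{n ≥ 0} F_n tⁿ`, as a subalgebra of `R[t]`. -/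
def reesAlg (𝓕 : IdealFiltration R) : Subalgebra R (Polynomial R) where
  carrier := {f | ∀ n : ℕ, f.coeff n ∈ 𝓕.F n}
  add_mem' := fun {a b} ha hb n => by
    rw [Polynomial.coeff_add]; exact (𝓕.F n).add_mem (ha n) (hb n)
  mul_mem' := fun {a b} ha hb n => by
    rw [Polynomial.coeff_mul]
    refine Submodule.sum_mem _ fun ij hij => ?_
    have h1 : (ij.1 : ℤ) + ij.2 = (n : ℤ) := by
      exact_mod_cast congrArg (fun k : ℕ => (k : ℤ)) (Finset.HasAntidiagonal.mem_antidiagonal.mp hij)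
    exact h1 ▸ 𝓕.mul_le _ _ (Ideal.mul_mem_mul (ha ij.1) (hb ij.2))
  algebraMap_mem' := fun r n => by
    simp only [Polynomial.algebraMap_apply, Polynomial.coeff_C]
    split
    · next h => subst h; rw [show ((0:ℕ):ℤ) = 0 by rfl, 𝓕.zero_eq]; trivial
    · exact zero_mem _

/-- An `F`-filtration `{M n}` of submodules of `M`: `M 0 = M`, decreasing,
`F m • M n ⊆ M (m + n)`. -/
structure ModuleFiltration (𝓕 : IdealFiltration R) (M : Type*) [AddCommGroup M]
    [Module R M] where
  Mn : ℤ → Submodule R M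
  zero_eq : Mn 0 = ⊤
  antitone : ∀ m n : ℤ, m ≤ n → Mn n ≤ Mn m
  smul_le : ∀ (m n : ℤ) (r : R) (x : M), r ∈ 𝓕.F m → x ∈ Mn n → r • x ∈ Mn (m + n)

variable {M : Type*} [AddCommGroup M] [Module R M]

/-- For a submodule `N ⊆ M`, the Rees module `R({Mₙ ∩ N}) = ⊕_{n ≥ 0} tⁿ ⊗ (Mₙ ∩ N)` of the
induced filtration on `N`, as a submodule of `R[t] ⊗_R M = PolynomialModule R M` over the
Rees algebra `R(F)`. -/
def reesSub (𝓕 : IdealFiltration R) (𝓜 : ModuleFiltration 𝓕 M) (N : Submodule R M) :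
    Submodule (reesAlg 𝓕) (PolynomialModule R M) where
  carrier := {v | ∀ n : ℕ, v.coeff n ∈ 𝓜.Mn n ⊓ N}
  add_mem' := fun {a b} ha hb n => by
    exact add_mem (ha n) (hb n)
  zero_mem' := fun n => zero_mem _
  smul_mem' := fun c v hv => by
    intro n
    show ((c : Polynomial R) • v).coeff n ∈ _
    rw [PolynomialModule.smul_apply]
    refine Submodule.sum_mem _ fun ij hij => ?_
    have h1 : (ij.1 : ℤ) + ij.2 = (n : ℤ) := by
      exact_mod_cast congrArg (fun k : ℕ => (k : ℤ)) (Finset.HasAntidiagonal.mem_antidiagonal.mp hij)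
    constructor
    · have := 𝓜.smul_le ij.1 ij.2 ((c : Polynomial R).coeff ij.1) (v.coeff ij.2)
        (c.2 ij.1) (hv ij.2).1
      rwa [h1] at this
    · exact N.smul_mem _ (hv ij.2).2

/-- The Rees module `R(M) = ⊕_{n ≥ 0} tⁿ ⊗ Mₙ` of the filtration `M = {Mₙ}`. -/
abbrev reesMod (𝓕 : IdealFiltration R) (𝓜 : ModuleFiltration 𝓕 M) :
    Submodule (reesAlg 𝓕) (PolynomialModule R M) :=
  reesSub 𝓕 𝓜 ⊤

end Rees

/-!
Write `P = √(ann_{R(F)} x)` with `x ∈ R(M) ⊆ M[t]`. Then `P` is the contraction to `R(F)` of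
`Q = √(ann_{R[t]} x)`. If `f • x = 0`, multiplying `x` by the leading coefficient `c` of `f` kills
the top coefficient of `x` (it equals the top coefficient of `f • x`), so `c ^ N • x = 0`; hence
`Q` contains the leading coefficients of its elements and `Q = pR[t]` with
`p = Q ∩ R = √(ann_R x)`. Finally `ann_R x` is the intersection of the annihilators of the finitely
many coefficients of `x`, so the prime `p` is the radical of one of them.
-/

open Polynomial

section Tower

variable {A B M : Type*} [CommSemiring A] [CommSemiring B] [Algebra A B] [AddCommMonoid M]
  [Module A M] [Module B M] [IsScalarTower A B M]

theorem Submodule.colon_bot_singleton_eq_comap (w : M) :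
    (⊥ : Submodule A M).colon {w} = ((⊥ : Submodule B M).colon {w}).comap (algebraMap A B) := by
  ext a
  simp only [Submodule.mem_colon_singleton, Submodule.mem_bot, Ideal.mem_comap, algebraMap_smul]

theorem IsAssociatedPrime.comap_algebraMap {P : Ideal B} (hP : IsAssociatedPrime P M) :
    IsAssociatedPrime (P.comap (algebraMap A B)) M := by
  obtain ⟨hprime, w, rfl⟩ := hP
  exact ⟨Ideal.comap_isPrime _ _, w, by
    rw [Ideal.comap_radical, ← Submodule.colon_bot_singleton_eq_comap]⟩

end Tower

theorem IsAssociatedPrime.of_finsupp {R M ι : Type*} [CommSemiring R] [AddCommMonoid M]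
    [Module R M] {p : Ideal R} (hp : IsAssociatedPrime p (ι →₀ M)) : IsAssociatedPrime p M := by
  obtain ⟨hprime, x, rfl⟩ := hp
  have hinf : x.support.inf (fun i ↦ (⊥ : Submodule R M).colon {x i}) ≤
      (⊥ : Submodule R (ι →₀ M)).colon {x} := fun r hr ↦ by
    rw [Submodule.mem_colon_singleton, Submodule.mem_bot]
    ext i
    by_cases hi : i ∈ x.support
    · simpa using (Finset.inf_le (f := fun i ↦ (⊥ : Submodule R M).colon {x i}) hi) hr
    · simp [Finsupp.notMem_support_iff.mp hi]
  obtain ⟨i, -, hi⟩ := hprime.inf_le'.mp (hinf.trans Ideal.le_radical)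
  refine ⟨hprime, x i, le_antisymm (Ideal.radical_mono fun r hr ↦ ?_) ?_⟩
  · simp only [Submodule.mem_colon_singleton, Submodule.mem_bot] at hr ⊢
    rw [← Finsupp.smul_apply, hr, Finsupp.zero_apply]
  · exact hprime.radical_le_iff.mpr hi

namespace PolynomialModule

variable {R M : Type*} [CommRing R] [AddCommGroup M] [Module R M]

theorem coeff_smul (r : R) (w : PolynomialModule R M) : (r • w).coeff = r • w.coeff := rfl

theorem coeff_smul_natDegree_add (f : R[X]) {w : PolynomialModule R M} {N : ℕ}
    (hw : ∀ n, N < n → w.coeff n = 0) :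
    (f • w).coeff (f.natDegree + N) = f.leadingCoeff • w.coeff N := by
  rw [smul_apply, Finset.sum_eq_single (f.natDegree, N)]
  · rfl
  · rintro ⟨i, j⟩ hij hne
    rw [Finset.HasAntidiagonal.mem_antidiagonal] at hij
    rcases lt_trichotomy i f.natDegree with hi | rfl | hi
    · rw [hw j (by omega), smul_zero]
    · exact absurd (by rw [show j = N by omega]) hne
    · rw [coeff_eq_zero_of_natDegree_lt hi, zero_smul]
  · simp

theorem leadingCoeff_pow_smul_eq_zero {f : R[X]} {w : PolynomialModule R M} {N : ℕ}
    (hw : ∀ n, N ≤ n → w.coeff n = 0) (hfw : f • w = 0) : f.leadingCoeff ^ N • w = 0 := by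
  induction N generalizing w with
  | zero => ext n; simp [hw n (Nat.zero_le n)]
  | succ N ih =>
    have hcw : ∀ n, N ≤ n → (f.leadingCoeff • w).coeff n = 0 := by
      rintro n hn
      rcases hn.eq_or_lt with rfl | hn
      · rw [coeff_smul, Finsupp.smul_apply, ← coeff_smul_natDegree_add f hw, hfw, coeff_zero,
          Finsupp.zero_apply]
      · rw [coeff_smul, Finsupp.smul_apply, hw n hn, smul_zero]
    rw [pow_succ, mul_smul]
    exact ih hcw (by rw [smul_comm, hfw, smul_zero])

theorem exists_leadingCoeff_pow_smul_eq_zero {f : R[X]} {w : PolynomialModule R M}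
    (hfw : f • w = 0) : ∃ m, f.leadingCoeff ^ m • w = 0 := by
  obtain ⟨N, hN⟩ := Finset.exists_nat_subset_range w.coeff.support
  exact ⟨N, leadingCoeff_pow_smul_eq_zero (fun n hn ↦ Finsupp.notMem_support_iff.mp
    fun h ↦ by simpa using (Finset.mem_range.mp (hN h)).trans_le hn) hfw⟩

theorem exists_leadingCoeff_pow_smul_eq_zero_of_pow_smul {f : R[X]} {k : ℕ}
    {w : PolynomialModule R M} (hfw : f ^ k • w = 0) : ∃ m, f.leadingCoeff ^ m • w = 0 := by
  induction k generalizing w with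
  | zero => exact ⟨0, by simpa using hfw⟩
  | succ k ih =>
    rw [pow_succ', mul_smul] at hfw
    obtain ⟨m, hm⟩ := exists_leadingCoeff_pow_smul_eq_zero hfw
    obtain ⟨m', hm'⟩ := ih (w := f.leadingCoeff ^ m • w) (by rw [smul_comm, hm])
    exact ⟨m' + m, by rw [pow_add, mul_smul, hm']⟩

theorem map_C_comap_C_radical_colon (w : PolynomialModule R M) :
    (((⊥ : Submodule R[X] (PolynomialModule R M)).colon {w}).radical.comap C).map C =
      ((⊥ : Submodule R[X] (PolynomialModule R M)).colon {w}).radical := by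
  refine Ideal.map_C_comap_of_comap_eq_leadingCoeff _ (le_antisymm (fun r hr ↦ ?_) fun r hr ↦ ?_)
  · exact (Ideal.mem_leadingCoeff _ r).mpr ⟨C r, hr, leadingCoeff_C r⟩
  · obtain ⟨f, ⟨k, hk⟩, rfl⟩ := (Ideal.mem_leadingCoeff _ r).mp hr
    simp only [Submodule.mem_colon_singleton, Submodule.mem_bot] at hk
    obtain ⟨m, hm⟩ := exists_leadingCoeff_pow_smul_eq_zero_of_pow_smul hk
    refine ⟨m, ?_⟩
    simp only [Submodule.mem_colon_singleton, Submodule.mem_bot, ← map_pow]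
    rw [← algebraMap_eq, algebraMap_smul, hm]

end PolynomialModule

section AssociatedPrimes

open PolynomialModule

variable {R M : Type*} [CommRing R] [AddCommGroup M] [Module R M]

theorem IsAssociatedPrime.eq_comap_val_map_C_comap {A : Subalgebra R R[X]} {P : Ideal A}
    (hP : IsAssociatedPrime P (PolynomialModule R M)) :
    P = ((P.comap (algebraMap R A)).map C).comap A.val := by
  obtain ⟨-, w, hw⟩ := hP
  have hPQ : P = ((⊥ : Submodule R[X] (PolynomialModule R M)).colon {w}).radical.comap
      (algebraMap A R[X]) := by
    rw [hw, Submodule.colon_bot_singleton_eq_comap (B := R[X]), Ideal.comap_radical]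
  have hp : P.comap (algebraMap R A) =
      ((⊥ : Submodule R[X] (PolynomialModule R M)).colon {w}).radical.comap C := by
    rw [hPQ, Ideal.comap_comap]; rfl
  rw [hp, map_C_comap_C_radical_colon]
  exact hPQ

theorem IsAssociatedPrime.of_polynomialModule {p : Ideal R}
    (hp : IsAssociatedPrime p (PolynomialModule R M)) : IsAssociatedPrime p M :=
  ((coeffLinearEquiv R R).isAssociatedPrime_iff.mp hp).of_finsupp

end AssociatedPrimes

theorem stmt7_general (R : Type) [CommRing R]
    (M : Type) [AddCommGroup M] [Module R M]
    (𝓕 : IdealFiltration R)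
    (𝓜 : ModuleFiltration 𝓕 M)
    (P : Ideal ↥(reesAlg 𝓕)) (hP : P ∈ associatedPrimes ↥(reesAlg 𝓕) ↥(reesMod 𝓕 𝓜)) :
    P.comap (algebraMap R ↥(reesAlg 𝓕)) ∈ associatedPrimes R M ∧
      P = Ideal.comap (reesAlg 𝓕).val
            (Ideal.map (Polynomial.C : R →+* Polynomial R)
              (P.comap (algebraMap R ↥(reesAlg 𝓕)))) := by
  have hP' : IsAssociatedPrime P (PolynomialModule R M) :=
    hP.map_of_injective _ (reesMod 𝓕 𝓜).injective_subtype
  exact ⟨hP'.comap_algebraMap.of_polynomialModule, hP'.eq_comap_val_map_C_comap⟩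

/-- Associated primes of the Rees module: if `P ∈ Ass_{R(F)} R(M)` then
`p = P ∩ R ∈ Ass_R M` and `P = pR[t] ∩ R(F)`. -/
theorem stmt7 (R : Type) [CommRing R] [IsNoetherianRing R]
    (M : Type) [AddCommGroup M] [Module R M] [Module.Finite R M]
    (𝓕 : IdealFiltration R) (h𝓕 : 𝓕.F 1 ≠ ⊤)
    (hNoeth : IsNoetherianRing ↥(reesAlg 𝓕))
    (𝓜 : ModuleFiltration 𝓕 M) (hfin : Module.Finite ↥(reesAlg 𝓕) ↥(reesMod 𝓕 𝓜))
    (P : Ideal ↥(reesAlg 𝓕)) (hP : P ∈ associatedPrimes ↥(reesAlg 𝓕) ↥(reesMod 𝓕 𝓜)) :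
    P.comap (algebraMap R ↥(reesAlg 𝓕)) ∈ associatedPrimes R M ∧
      P = Ideal.comap (reesAlg 𝓕).val
            (Ideal.map (Polynomial.C : R →+* Polynomial R)
              (P.comap (algebraMap R ↥(reesAlg 𝓕)))) :=
  stmt7_general R M 𝓕 𝓜 P hP
end

section
/- In the setting of a Noetherian Rees algebra R(F) with F_1 ≠ R and a finitely generated Rees module R(M): for every p ∈ Ass_R M, the prime pR[t] ∩ R(F) is an associated prime of R(M) over R(F). -/
set_option synthInstance.maxHeartbeats 1000000
set_option maxHeartbeats 1000000

open IsLocalRing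

/-!
The annihilator of `1 ⊗ x` in `R[t] ⊗_R M` consists of the polynomials all of whose coefficients
kill `x`, so it is `(0 :_R x) R[t]`. Since `R(M)` is an `R(F)`-submodule of `R[t] ⊗_R M`, the
annihilator of `1 ⊗ x` in `R(M)` is its contraction `(0 :_R x) R[t] ∩ R(F)`, which is prime when
`(0 :_R x)` is.
-/

open Polynomial

namespace PolynomialModule

variable {R M : Type*} [CommRing R] [AddCommGroup M] [Module R M]

theorem smul_single_zero_eq_zero_iff (f : R[X]) (x : M) :
    f • single R 0 x = 0 ↔ ∀ n, f.coeff n • x = 0 := by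
  simp only [← coeff_inj, Finsupp.ext_iff, smul_single_apply, zero_le, if_true, Nat.sub_zero,
    coeff_zero, Finsupp.coe_zero, Pi.zero_apply]

theorem colon_single_zero (x : M) :
    (⊥ : Submodule R[X] (PolynomialModule R M)).colon {single R 0 x} =
      Ideal.map C ((⊥ : Submodule R M).colon {x}) := by
  ext f
  simp only [Submodule.mem_colon_singleton, Submodule.mem_bot, Ideal.mem_map_C_iff,
    smul_single_zero_eq_zero_iff]

end PolynomialModule

namespace reesMod

variable {R M : Type*} [CommRing R] [AddCommGroup M] [Module R M]
  {𝓕 : IdealFiltration R} (𝓜 : ModuleFiltration 𝓕 M)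

theorem single_zero_mem (x : M) : PolynomialModule.single R 0 x ∈ reesMod 𝓕 𝓜 := by
  rintro (_ | n)
  · simp [𝓜.zero_eq]
  · simp

/-- The element `1 ⊗ x` of degree `0` of the Rees module. -/
noncomputable def single₀ (x : M) : reesMod 𝓕 𝓜 :=
  ⟨PolynomialModule.single R 0 x, single_zero_mem 𝓜 x⟩

theorem colon_single₀ (x : M) :
    (⊥ : Submodule (reesAlg 𝓕) (reesMod 𝓕 𝓜)).colon {single₀ 𝓜 x} =
      Ideal.comap (reesAlg 𝓕).val (Ideal.map C ((⊥ : Submodule R M).colon {x})) := by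
  ext f
  rw [Ideal.mem_comap, ← PolynomialModule.colon_single_zero, Submodule.mem_colon_singleton,
    Submodule.mem_colon_singleton, Submodule.mem_bot, Submodule.mem_bot, ← Subtype.coe_inj]
  rfl

end reesMod

theorem stmt8_general (R : Type) [CommRing R] [IsNoetherianRing R]
    (M : Type) [AddCommGroup M] [Module R M]
    (𝓕 : IdealFiltration R)
    (𝓜 : ModuleFiltration 𝓕 M)
    (p : Ideal R) (hp : p ∈ associatedPrimes R M) :
    Ideal.comap (reesAlg 𝓕).val (Ideal.map (Polynomial.C : R →+* Polynomial R) p) ∈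
      associatedPrimes ↥(reesAlg 𝓕) ↥(reesMod 𝓕 𝓜) := by
  obtain ⟨hpp, x, rfl⟩ := isAssociatedPrime_iff.mp hp
  refine ⟨Ideal.comap_isPrime _ _, reesMod.single₀ 𝓜 x, ?_⟩
  rw [reesMod.colon_single₀, Ideal.IsPrime.radical inferInstance]

/-- For every `p ∈ Ass_R M`, the prime `pR[t] ∩ R(F)` is an associated prime of
the Rees module `R(M)` over the Rees algebra `R(F)`. -/
theorem stmt8 (R : Type) [CommRing R] [IsNoetherianRing R]
    (M : Type) [AddCommGroup M] [Module R M] [Module.Finite R M]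
    (𝓕 : IdealFiltration R) (h𝓕 : 𝓕.F 1 ≠ ⊤)
    (hNoeth : IsNoetherianRing ↥(reesAlg 𝓕))
    (𝓜 : ModuleFiltration 𝓕 M) (hfin : Module.Finite ↥(reesAlg 𝓕) ↥(reesMod 𝓕 𝓜))
    (p : Ideal R) (hp : p ∈ associatedPrimes R M) :
    Ideal.comap (reesAlg 𝓕).val (Ideal.map (Polynomial.C : R →+* Polynomial R) p) ∈
      associatedPrimes ↥(reesAlg 𝓕) ↥(reesMod 𝓕 𝓜) :=
  stmt8_general R M 𝓕 𝓜 p hp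
end
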